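/- arXiv:2002.07284 — 4 statements merged into one kernel-verified Lean document; each statement's English description precedes it below -/
import Mathlib

section
/- Let ℓ : ℝ → ℝ be a proper lower semi-continuous convex function. Then the Moreau envelope M_ℓ(x, λ) = inf_v [ (x-v)²/(2λ) + ℓ(v) ] is jointly convex in (x, λ) on ℝ × (0,∞). -/
/-- A real-valued convex function on ℝ has an affine minorant through `ℓ 0`. -/
lemma aux_minorant (ℓ : ℝ → ℝ) (hconv : ConvexOn ℝ Set.univ ℓ) :
    ∃ s : ℝ, ∀ v : ℝ, ℓ 0 + s * v ≤ ℓ v := by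
  set S : Set ℝ := (fun w => (ℓ w - ℓ 0) / w) '' Set.Ioi 0 with hS
  have hne : S.Nonempty := ⟨(ℓ 1 - ℓ 0) / 1, ⟨1, by norm_num⟩⟩
  have hbdd : BddBelow S := by
    refine ⟨(ℓ 0 - ℓ (-1)) / (0 - (-1)), ?_⟩
    rintro y ⟨w, hw, rfl⟩
    have := hconv.slope_mono_adjacent (Set.mem_univ (-1)) (Set.mem_univ w)
      (by norm_num) hw
    simpa using this
  refine ⟨sInf S, fun v => ?_⟩
  rcases lt_trichotomy v 0 with hv | hv | hv
  · have hle : (ℓ 0 - ℓ v) / (0 - v) ≤ sInf S := by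
      apply le_csInf hne
      rintro y ⟨w, hw, rfl⟩
      have := hconv.slope_mono_adjacent (Set.mem_univ v) (Set.mem_univ w) hv hw
      simpa using this
    have hv' : 0 < -v := by linarith
    rw [show (0:ℝ) - v = -v by ring, div_le_iff₀ hv'] at hle
    nlinarith
  · simp [hv]
  · have hle : sInf S ≤ (ℓ v - ℓ 0) / v := csInf_le hbdd ⟨v, hv, rfl⟩
    rw [le_div_iff₀ hv] at hle
    nlinarith

/-- The objective of the Moreau envelope is bounded below. -/
lemma aux_bdd (ℓ : ℝ → ℝ) (s : ℝ) (hs : ∀ v : ℝ, ℓ 0 + s * v ≤ ℓ v)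
    (x lam : ℝ) (hlam : 0 < lam) :
    BddBelow (Set.range fun v : ℝ => (x - v)^2 / (2 * lam) + ℓ v) := by
  refine ⟨ℓ 0 + s * x - s ^ 2 * lam / 2, ?_⟩
  rintro y ⟨v, rfl⟩
  have h1 := hs v
  have h2 : s * (x - v) - s ^ 2 * lam / 2 ≤ (x - v) ^ 2 / (2 * lam) := by
    rw [le_div_iff₀ (by positivity : (0:ℝ) < 2 * lam)]
    nlinarith [sq_nonneg (v - x + lam * s)]
  simp only [Set.mem_setOf_eq]
  nlinarith

/-- The Moreau envelope M_ℓ(x,λ) = inf_v [(x-v)²/(2λ) + ℓ(v)] of a proper lsc convex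
function is jointly convex in (x,λ) on ℝ × (0,∞). -/
theorem stmt1 (ℓ : ℝ → ℝ) (hconv : ConvexOn ℝ Set.univ ℓ)
    (hlsc : LowerSemicontinuous ℓ) :
    ConvexOn ℝ {p : ℝ × ℝ | 0 < p.2}
      (fun p : ℝ × ℝ => ⨅ v : ℝ, ((p.1 - v)^2 / (2 * p.2) + ℓ v)) := by
  obtain ⟨s, hs⟩ := aux_minorant ℓ hconv
  have hset : Convex ℝ {p : ℝ × ℝ | 0 < p.2} := by
    intro p hp q hq a b ha hb hab
    simp only [Set.mem_setOf_eq] at *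
    have : (a • p + b • q).2 = a * p.2 + b * q.2 := rfl
    rw [this]
    rcases ha.eq_or_lt with h | h
    · have hb1 : b = 1 := by linarith
      subst hb1; rw [← h]; simpa using hq
    · nlinarith [mul_nonneg hb hq.le, mul_pos h hp]
  refine ⟨hset, ?_⟩
  intro p hp q hq a b ha hb hab
  simp only [Set.mem_setOf_eq] at hp hq
  set c : ℝ × ℝ := a • p + b • q with hc
  have hc1 : c.1 = a * p.1 + b * q.1 := rfl
  have hc2 : c.2 = a * p.2 + b * q.2 := rfl
  have hcmem : (0:ℝ) < c.2 := hset hp hq ha hb hab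
  have hL : (0:ℝ) < a * p.2 + b * q.2 := by rwa [hc2] at hcmem
  -- key pointwise inequality
  have key : ∀ v w : ℝ,
      (c.1 - (a * v + b * w))^2 / (2 * c.2) + ℓ (a * v + b * w)
        ≤ a * ((p.1 - v)^2 / (2 * p.2) + ℓ v) + b * ((q.1 - w)^2 / (2 * q.2) + ℓ w) := by
    intro v w
    have hℓ : ℓ (a * v + b * w) ≤ a * ℓ v + b * ℓ w := by
      have := hconv.2 (Set.mem_univ v) (Set.mem_univ w) ha hb hab
      simpa using this
    have hquad : (c.1 - (a * v + b * w))^2 / (2 * c.2)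
        ≤ a * ((p.1 - v)^2 / (2 * p.2)) + b * ((q.1 - w)^2 / (2 * q.2)) := by
      set t₁ := p.1 - v
      set t₂ := q.1 - w
      have h1 : c.1 - (a * v + b * w) = a * t₁ + b * t₂ := by
        rw [hc1]; ring
      rw [h1, hc2]
      rw [mul_div_assoc' a _ _, mul_div_assoc' b _ _,
        div_add_div _ _ (by positivity : (2:ℝ) * p.2 ≠ 0) (by positivity : (2:ℝ) * q.2 ≠ 0),
        div_le_div_iff₀ (by positivity) (by positivity)]
      nlinarith [mul_nonneg (mul_nonneg ha hb) (sq_nonneg (t₁ * q.2 - t₂ * p.2)),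
        mul_pos hp hq, sq_nonneg (a * t₁ + b * t₂)]
    linarith
  have bddc := aux_bdd ℓ s hs c.1 c.2 hcmem
  have hI : ∀ v w : ℝ, (⨅ u : ℝ, ((c.1 - u)^2 / (2 * c.2) + ℓ u))
      ≤ a * ((p.1 - v)^2 / (2 * p.2) + ℓ v) + b * ((q.1 - w)^2 / (2 * q.2) + ℓ w) :=
    fun v w => le_trans (ciInf_le bddc (a * v + b * w)) (key v w)
  have main : (⨅ u : ℝ, ((c.1 - u)^2 / (2 * c.2) + ℓ u))
      ≤ (⨅ v : ℝ, a * ((p.1 - v)^2 / (2 * p.2) + ℓ v))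
        + (⨅ w : ℝ, b * ((q.1 - w)^2 / (2 * q.2) + ℓ w)) :=
    le_ciInf_add_ciInf hI
  rw [← Real.mul_iInf_of_nonneg ha, ← Real.mul_iInf_of_nonneg hb] at main
  simpa [smul_eq_mul] using main
end

section
/- Let ℓ : ℝ → ℝ be convex and continuously differentiable. Fix x ∈ ℝ, and for γ > 0 let p_γ = prox_ℓ(x, 1/γ). Then for any γ̃, γ > 0: (γ̃ - γ)(p_γ̃ - p_γ)(p_γ - x) + γ̃ (p_γ̃ - p_γ)² ≤ 0. -/
/-! Both proximal points satisfy the first-order condition `ℓ'(p_γ) = γ (x - p_γ)`, and the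
derivative of a convex function is monotone, so `(ℓ'(p_γ̃) - ℓ'(p_γ)) (p_γ̃ - p_γ) ≥ 0`.
Substituting the first-order conditions, this is exactly the claimed inequality. -/

theorem deriv_eq_of_forall_prox_objective_le {ℓ : ℝ → ℝ} {x γ p : ℝ}
    (hℓ : DifferentiableAt ℝ ℓ p)
    (hp : ∀ u : ℝ, γ / 2 * (x - p)^2 + ℓ p ≤ γ / 2 * (x - u)^2 + ℓ u) :
    deriv ℓ p = γ * (x - p) := by
  have hderiv : HasDerivAt (fun u => γ / 2 * (x - u)^2 + ℓ u)
      (γ / 2 * (2 * (x - p) ^ 1 * (0 - 1)) + deriv ℓ p) p :=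
    ((((hasDerivAt_const p x).sub (hasDerivAt_id p)).pow 2).const_mul (γ / 2)).add
      hℓ.hasDerivAt
  have hmin : IsLocalMin (fun u => γ / 2 * (x - u)^2 + ℓ u) p :=
    Filter.Eventually.of_forall hp
  linear_combination hmin.hasDerivAt_eq_zero hderiv

theorem ConvexOn.deriv_sub_mul_sub_nonneg {ℓ : ℝ → ℝ} (hconv : ConvexOn ℝ Set.univ ℓ)
    (hdiff : Differentiable ℝ ℓ) (a b : ℝ) :
    0 ≤ (deriv ℓ b - deriv ℓ a) * (b - a) := by
  have hmono : Monotone (deriv ℓ) :=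
    monotoneOn_univ.mp (hconv.monotoneOn_deriv fun u _ => hdiff u)
  exact (monovary_id_iff.mpr hmono).sub_mul_sub_nonneg a b

theorem stmt7_general (ℓ : ℝ → ℝ) (hconv : ConvexOn ℝ Set.univ ℓ)
    (hdiff : Differentiable ℝ ℓ)
    (x γ γt p pt : ℝ)
    (hp : ∀ u : ℝ, γ / 2 * (x - p)^2 + ℓ p ≤ γ / 2 * (x - u)^2 + ℓ u)
    (hpt : ∀ u : ℝ, γt / 2 * (x - pt)^2 + ℓ pt ≤ γt / 2 * (x - u)^2 + ℓ u) :
    (γt - γ) * (pt - p) * (p - x) + γt * (pt - p)^2 ≤ 0 := by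
  have hmono := hconv.deriv_sub_mul_sub_nonneg hdiff p pt
  rw [deriv_eq_of_forall_prox_objective_le (hdiff p) hp,
    deriv_eq_of_forall_prox_objective_le (hdiff pt) hpt] at hmono
  linear_combination hmono

/-- For ℓ convex and C¹, with p, pt the proximal points of x at parameters 1/γ, 1/γt,
we have (γ̃-γ)(p̃-p)(p-x) + γ̃(p̃-p)² ≤ 0. -/
theorem stmt7 (ℓ : ℝ → ℝ) (hconv : ConvexOn ℝ Set.univ ℓ)
    (hdiff : Differentiable ℝ ℓ) (hcont : Continuous (deriv ℓ))
    (x γ γt p pt : ℝ) (hγ : 0 < γ) (hγt : 0 < γt)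
    (hp : ∀ u : ℝ, γ / 2 * (x - p)^2 + ℓ p ≤ γ / 2 * (x - u)^2 + ℓ u)
    (hpt : ∀ u : ℝ, γt / 2 * (x - pt)^2 + ℓ pt ≤ γt / 2 * (x - u)^2 + ℓ u) :
    (γt - γ) * (pt - p) * (p - x) + γt * (pt - p)^2 ≤ 0 :=
  stmt7_general ℓ hconv hdiff x γ γt p pt hp hpt
end

section
/- Let ℓ : ℝ → ℝ be convex and continuously differentiable, fix x ∈ ℝ, and for γ > 0 set p_γ = prox_ℓ(x, 1/γ). Then for γ₂ > γ₁ > 0: (x - p_{γ₂})² - (x - p_{γ₁})² ≤ - (γ₁/(γ₂ - γ₁)) · (p_{γ₁} - p_{γ₂})². -/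
/-!
For any `γ`, `g_γ u = γ/2 (x - u)² + ℓ u` is `γ`-strongly convex, so it grows at least
quadratically away from a minimiser: `g_γ₁ p₁ + γ₁/2 (p₂ - p₁)² ≤ g_γ₁ p₂`. Adding
`g_γ₂ p₂ ≤ g_γ₂ p₁` cancels the `ℓ` terms and leaves
`(γ₂ - γ₁)/2 ((x - p₂)² - (x - p₁)²) ≤ -γ₁/2 (p₁ - p₂)²`.
-/

open Set Filter Topology

variable {E : Type*} [NormedAddCommGroup E] [InnerProductSpace ℝ E]

lemma ConvexOn.strongConvexOn_mul_sq_norm_sub_add {s : Set E} {ℓ : E → ℝ} (hℓ : ConvexOn ℝ s ℓ)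
    (m : ℝ) (x : E) : StrongConvexOn s m fun u ↦ m / 2 * ‖x - u‖ ^ 2 + ℓ u := by
  rw [strongConvexOn_iff_convex]
  have hlin : ConvexOn ℝ s (innerₛₗ ℝ (-(m • x))) := LinearMap.convexOn _ hℓ.1
  refine ((hℓ.add hlin).add_const (m / 2 * ‖x‖ ^ 2)).congr fun u _ ↦ ?_
  rw [Pi.add_apply, Pi.add_apply, innerₛₗ_apply_apply, inner_neg_left, real_inner_smul_left,
    norm_sub_sq_real]
  ring

lemma StrongConvexOn.add_mul_sq_norm_sub_le_of_isMinOn {s : Set E} {m : ℝ} {g : E → ℝ} {p u : E}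
    (hg : StrongConvexOn s m g) (hmin : IsMinOn g s p) (hp : p ∈ s) (hu : u ∈ s) :
    g p + m / 2 * ‖u - p‖ ^ 2 ≤ g u := by
  have hstep : ∀ t ∈ Ioo (0 : ℝ) 1, g p + (1 - t) * (m / 2 * ‖u - p‖ ^ 2) ≤ g u := by
    rintro t ⟨ht₀, ht₁⟩
    have hmid := hg.2 hp hu (sub_nonneg.2 ht₁.le) ht₀.le (sub_add_cancel 1 t)
    have hle : g p ≤ g ((1 - t) • p + t • u) :=
      hmin (hg.1 hp hu (sub_nonneg.2 ht₁.le) ht₀.le (sub_add_cancel 1 t))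
    rw [norm_sub_rev] at hmid
    simp only [smul_eq_mul] at hmid
    refine le_of_mul_le_mul_left ?_ ht₀
    linarith
  have hlim : Tendsto (fun t : ℝ ↦ g p + (1 - t) * (m / 2 * ‖u - p‖ ^ 2)) (𝓝[>] 0)
      (𝓝 (g p + m / 2 * ‖u - p‖ ^ 2)) := by
    have : Continuous (fun t : ℝ ↦ g p + (1 - t) * (m / 2 * ‖u - p‖ ^ 2)) := by fun_prop
    simpa using this.continuousWithinAt.tendsto (x := 0) (s := Ioi 0)
  exact le_of_tendsto hlim (eventually_of_mem (Ioo_mem_nhdsGT one_pos) hstep)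

theorem stmt8_general (ℓ : ℝ → ℝ) (hconv : ConvexOn ℝ Set.univ ℓ)
    (x γ₁ γ₂ p₁ p₂ : ℝ) (hγ₂ : γ₁ < γ₂)
    (hp₁ : ∀ u : ℝ, γ₁ / 2 * (x - p₁)^2 + ℓ p₁ ≤ γ₁ / 2 * (x - u)^2 + ℓ u)
    (hp₂ : ∀ u : ℝ, γ₂ / 2 * (x - p₂)^2 + ℓ p₂ ≤ γ₂ / 2 * (x - u)^2 + ℓ u) :
    (x - p₂)^2 - (x - p₁)^2 ≤ -(γ₁ / (γ₂ - γ₁)) * (p₁ - p₂)^2 := by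
  have hmin : IsMinOn (fun u ↦ γ₁ / 2 * ‖x - u‖ ^ 2 + ℓ u) univ p₁ := fun u _ ↦ by
    simpa only [mem_ofPred_eq, Real.norm_eq_abs, sq_abs] using hp₁ u
  have hgrowth := (hconv.strongConvexOn_mul_sq_norm_sub_add γ₁ x).add_mul_sq_norm_sub_le_of_isMinOn
    hmin (mem_univ p₁) (mem_univ p₂)
  simp only [Real.norm_eq_abs, sq_abs] at hgrowth
  have hswap := hp₂ p₁
  rw [neg_mul, div_mul_eq_mul_div, ← neg_div, le_div_iff₀ (sub_pos.2 hγ₂)]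
  linarith

/-- For ℓ convex and C¹ and γ₂ > γ₁ > 0, with p₁, p₂ the proximal points of x
at parameters 1/γ₁, 1/γ₂:
(x - p₂)² - (x - p₁)² ≤ -(γ₁/(γ₂-γ₁))·(p₁-p₂)². -/
theorem stmt8 (ℓ : ℝ → ℝ) (hconv : ConvexOn ℝ Set.univ ℓ)
    (hdiff : Differentiable ℝ ℓ) (hcont : Continuous (deriv ℓ))
    (x γ₁ γ₂ p₁ p₂ : ℝ) (hγ₁ : 0 < γ₁) (hγ₂ : γ₁ < γ₂)
    (hp₁ : ∀ u : ℝ, γ₁ / 2 * (x - p₁)^2 + ℓ p₁ ≤ γ₁ / 2 * (x - u)^2 + ℓ u)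
    (hp₂ : ∀ u : ℝ, γ₂ / 2 * (x - p₂)^2 + ℓ p₂ ≤ γ₂ / 2 * (x - u)^2 + ℓ u) :
    (x - p₂)^2 - (x - p₁)^2 ≤ -(γ₁ / (γ₂ - γ₁)) * (p₁ - p₂)^2 :=
  stmt8_general ℓ hconv x γ₁ γ₂ p₁ p₂ hγ₂ hp₁ hp₂
end

section
/- Let ℓ : ℝ → ℝ be proper convex, continuously differentiable with ℓ'(0) ≠ 0. Let (α₁, μ₁, λ₁) ≠ (α₂, μ₂, λ₂) with λ₁, λ₂ > 0. Then there exists (x, z) ∈ ℝ² such that prox_ℓ(α₁ x + μ₁ z, λ₁) ≠ prox_ℓ(α₂ x + μ₂ z, λ₂). -/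
lemma prox_deriv_eq (ℓ : ℝ → ℝ) (hdiff : Differentiable ℝ ℓ) (l : ℝ) (hl : 0 < l)
    (P : ℝ → ℝ)
    (hP : ∀ w v : ℝ, (w - P w)^2 / (2 * l) + ℓ (P w) ≤ (w - v)^2 / (2 * l) + ℓ v)
    (w : ℝ) : deriv ℓ (P w) = (w - P w) / l := by
  have hmin : IsLocalMin (fun v => (w - v)^2 / (2 * l) + ℓ v) (P w) :=
    Filter.Eventually.of_forall (fun v => hP w v)
  have h1 : HasDerivAt (fun v : ℝ => (w - v)^2 / (2 * l))
      ((2 * (w - P w) ^ 1 * (0 - 1)) / (2 * l)) (P w) :=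
    (((hasDerivAt_const (P w) w).sub (hasDerivAt_id (P w))).pow 2).div_const (2 * l)
  have h2 : HasDerivAt (fun v => (w - v)^2 / (2 * l) + ℓ v)
      ((2 * (w - P w) ^ 1 * (0 - 1)) / (2 * l) + deriv ℓ (P w)) (P w) :=
    h1.add (hdiff (P w)).hasDerivAt
  have h3 := hmin.hasDerivAt_eq_zero h2
  have hl' : l ≠ 0 := ne_of_gt hl
  field_simp at h3 ⊢
  linarith [h3]

/-- If ℓ is proper convex, C¹ with ℓ'(0) ≠ 0, and (α₁,μ₁,l₁) ≠ (α₂,μ₂,l₂) with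
l₁,l₂ > 0, then the two proximal maps differ somewhere:
∃ (x,z), prox_ℓ(α₁x+μ₁z, l₁) ≠ prox_ℓ(α₂x+μ₂z, l₂). -/
theorem stmt9 (ℓ : ℝ → ℝ) (hconv : ConvexOn ℝ Set.univ ℓ)
    (hdiff : Differentiable ℝ ℓ) (hcont : Continuous (deriv ℓ))
    (h0 : deriv ℓ 0 ≠ 0)
    (α₁ μ₁ l₁ α₂ μ₂ l₂ : ℝ) (hl₁ : 0 < l₁) (hl₂ : 0 < l₂)
    (hne : (α₁, μ₁, l₁) ≠ (α₂, μ₂, l₂))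
    (P₁ P₂ : ℝ → ℝ)
    (hP₁ : ∀ w v : ℝ, (w - P₁ w)^2 / (2 * l₁) + ℓ (P₁ w) ≤ (w - v)^2 / (2 * l₁) + ℓ v)
    (hP₂ : ∀ w v : ℝ, (w - P₂ w)^2 / (2 * l₂) + ℓ (P₂ w) ≤ (w - v)^2 / (2 * l₂) + ℓ v) :
    ∃ x z : ℝ, P₁ (α₁ * x + μ₁ * z) ≠ P₂ (α₂ * x + μ₂ * z) := by
  by_contra h
  push_neg at h
  have key₁ := prox_deriv_eq ℓ hdiff l₁ hl₁ P₁ hP₁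
  have key₂ := prox_deriv_eq ℓ hdiff l₂ hl₂ P₂ hP₂
  have hl₁' : l₁ ≠ 0 := ne_of_gt hl₁
  have hl₂' : l₂ ≠ 0 := ne_of_gt hl₂
  -- At (0,0): P₁ 0 = P₂ 0
  have h00 : P₁ 0 = P₂ 0 := by have := h 0 0; simpa using this
  have e0 : (0 - P₁ 0) / l₁ = (0 - P₁ 0) / l₂ := by
    rw [← key₁ 0, h00]; exact key₂ 0
  by_cases hl : l₁ = l₂
  · -- then α₁ = α₂ and μ₁ = μ₂ follow
    have hα : α₁ = α₂ := by
      have h10 : P₁ α₁ = P₂ α₂ := by have := h 1 0; simpa using this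
      have e1 : (α₁ - P₁ α₁) / l₁ = (α₂ - P₁ α₁) / l₂ := by
        rw [← key₁ α₁, h10]; exact key₂ α₂
      rw [← hl] at e1
      field_simp at e1
      linarith
    have hμ : μ₁ = μ₂ := by
      have h01 : P₁ μ₁ = P₂ μ₂ := by have := h 0 1; simpa using this
      have e1 : (μ₁ - P₁ μ₁) / l₁ = (μ₂ - P₁ μ₁) / l₂ := by
        rw [← key₁ μ₁, h01]; exact key₂ μ₂
      rw [← hl] at e1
      field_simp at e1
      linarith
    exact hne (by rw [hα, hμ, hl])
  · -- l₁ ≠ l₂ forces P₁ 0 = 0, hence deriv ℓ 0 = 0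
    have hp0 : P₁ 0 = 0 := by
      have h2 := (div_eq_div_iff hl₁' hl₂').mp e0
      by_contra hp
      have hp' : (0 - P₁ 0) ≠ 0 := by
        intro hc; apply hp; linarith [sub_eq_zero.mp hc]
      exact hl (mul_left_cancel₀ hp' h2).symm
    have : deriv ℓ 0 = 0 := by
      have := key₁ 0
      rw [hp0] at this
      simpa using this
    exact h0 this
end
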